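/- Let F be a field and let M be the linear finite transducer over F with structural matrices A ∈ M_{n×n}(F), B ∈ M_{n×ℓ}(F), C ∈ M_{m×n}(F), D ∈ M_{m×ℓ}(F), with transfer function matrix H(z) = C(I − Az)^{−1}Bz + D, regarded as an m × ℓ matrix over the localization F[z]_S (S = 1 + zF[z]). Suppose P ∈ GL_m(F[z]_S) and Q ∈ GL_ℓ(F[z]_S) satisfy P·H·Q = diag(z^{e_1}, …, z^{e_r}, 0, …, 0) with e_1 ≤ … ≤ e_r. Then for τ ∈ ℕ, M is injective with delay τ if and only if r = ℓ and e_r ≤ τ. -/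

import Mathlib

/-- Extension of the state transition function of a finite transducer to finite words. -/
def deltaStar {X S : Type*} (δ : S → X → S) : S → List X → S
  | s, [] => s
  | s, a :: w => deltaStar δ (δ s a) w

/-- Extension of the output function of a finite transducer to finite words. -/
def lambdaStar {X Y S : Type*} (δ : S → X → S) (lam : S → X → Y) : S → List X → List Y
  | _, [] => []
  | s, a :: w => lam s a :: lambdaStar δ lam (δ s a) w

/-- A linear finite transducer over `F` with structural parameters `ℓ, m, n`, identified
with its quadruple of structural matrices `(A, B, C, D)`; its input alphabet is `F^ℓ`,
its output alphabet is `F^m` and its state space is `F^n`. -/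
structure LFT (F : Type) [Field F] (ℓ m n : ℕ) where
  A : Matrix (Fin n) (Fin n) F
  B : Matrix (Fin n) (Fin ℓ) F
  C : Matrix (Fin m) (Fin n) F
  D : Matrix (Fin m) (Fin ℓ) F

namespace LFT

variable {F : Type} [Field F] {ℓ m n n₁ n₂ : ℕ}

/-- The state transition function `δ(s, x) = As + Bx` of a linear finite transducer. -/
def del (M : LFT F ℓ m n) (s : Fin n → F) (x : Fin ℓ → F) : Fin n → F :=
  M.A.mulVec s + M.B.mulVec x

/-- The output function `λ(s, x) = Cs + Dx` of a linear finite transducer. -/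
def out (M : LFT F ℓ m n) (s : Fin n → F) (x : Fin ℓ → F) : Fin m → F :=
  M.C.mulVec s + M.D.mulVec x


end LFT

/-- A transducer is injective with delay `τ` (`τ`-injective) if for every state `s`,
inputs `x, x''` and input words `α, α''` of length `τ`, `λ(s, xα) = λ(s, x''α'')` implies
`x = x''`. -/
def TauInjective {X Y S : Type*} (δ : S → X → S) (lam : S → X → Y) (τ : ℕ) : Prop :=
  ∀ (s : S) (x x'' : X) (α α'' : List X), α.length = τ → α''.length = τ →
    lambdaStar δ lam s (x :: α) = lambdaStar δ lam s (x'' :: α'') → x = x''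

/-- The multiplicative submonoid `S = 1 + zF[z]` of `F[z]` of polynomials with constant
term `1`. -/
def oneS (F : Type) [Field F] : Submonoid (Polynomial F) where
  carrier := {p : Polynomial F | p.coeff 0 = 1}
  one_mem' := by simp
  mul_mem' := by
    intro a b ha hb
    simp only [Set.mem_setOf_eq] at *
    rw [Polynomial.mul_coeff_zero, ha, hb, one_mul]

/-- The matrix `Az` over `F[z]` associated to a square matrix `A` over `F`. -/
noncomputable def zMatP {F : Type} [Field F] {n : ℕ} (A : Matrix (Fin n) (Fin n) F) :
    Matrix (Fin n) (Fin n) (Polynomial F) :=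
  (Polynomial.X : Polynomial F) • A.map Polynomial.C

/-- The polynomial `f(z) = det(I − Az)`. -/
noncomputable def fPoly {F : Type} [Field F] {n : ℕ} (A : Matrix (Fin n) (Fin n) F) :
    Polynomial F :=
  (1 - zMatP A).det

/-- The polynomial matrix `f·H = C·(I − Az)^⋆·B·z + f·D`. -/
noncomputable def fHMat {F : Type} [Field F] {ℓ m n : ℕ}
    (A : Matrix (Fin n) (Fin n) F) (B : Matrix (Fin n) (Fin ℓ) F)
    (C : Matrix (Fin m) (Fin n) F) (D : Matrix (Fin m) (Fin ℓ) F) :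
    Matrix (Fin m) (Fin ℓ) (Polynomial F) :=
  (Polynomial.X : Polynomial F) •
      (C.map Polynomial.C * (1 - zMatP A).adjugate * B.map Polynomial.C) +
    fPoly A • D.map Polynomial.C

lemma fPoly_mem_oneS {F : Type} [Field F] {n : ℕ} (A : Matrix (Fin n) (Fin n) F) :
    fPoly A ∈ oneS F := by
  show (fPoly A).coeff 0 = 1
  rw [Polynomial.coeff_zero_eq_eval_zero]
  have h1 : Polynomial.eval 0 (fPoly A) =
      ((Polynomial.evalRingHom (0 : F)).mapMatrix (1 - zMatP A)).det :=
    RingHom.map_det (Polynomial.evalRingHom (0 : F)) (1 - zMatP A)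
  have h2 : (Polynomial.evalRingHom (0 : F)).mapMatrix (1 - zMatP A) = 1 := by
    ext i j
    by_cases hij : i = j <;>
      simp [zMatP, Matrix.one_apply, Matrix.sub_apply, Matrix.smul_apply, smul_eq_mul,
        Matrix.map_apply, hij]
  rw [h1, h2, Matrix.det_one]

/-- The transfer function matrix `H(z) = C(I − Az)⁻¹Bz + D` of an LFT, regarded as a
matrix over the localization `F[z]_S` (`S = 1 + zF[z]`): its `(i,j)` entry is the
fraction `(f·H)_{ij} / f` with `f = det(I − Az) ∈ S`. -/
noncomputable def transferMatLoc {F : Type} [Field F] {ℓ m n : ℕ}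
    (A : Matrix (Fin n) (Fin n) F) (B : Matrix (Fin n) (Fin ℓ) F)
    (C : Matrix (Fin m) (Fin n) F) (D : Matrix (Fin m) (Fin ℓ) F) :
    Matrix (Fin m) (Fin ℓ) (Localization (oneS F)) :=
  Matrix.of fun i j => Localization.mk (fHMat A B C D i j) ⟨fPoly A, fPoly_mem_oneS A⟩


/-!
Expanding `(I - Az)⁻¹ = Σ Aᵏzᵏ` in `F⟦z⟧`, the `k`-th output of `M` from state `s` on a word
`w = x₀x₁…` is `C Aᵏ s` plus the `k`-th coefficient of `H(z)·u(z)`, where `u = Σ xₖzᵏ`.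
Comparing two runs from the same state, `M` is `τ`-injective iff for every `u ∈ F⟦z⟧^ℓ`,
`z^(τ+1) ∣ H u` forces `z ∣ u`. Elements of `S` are units of `F⟦z⟧`, so `F[z]_S` maps into
`F⟦z⟧`, and there the condition is unchanged by `H ↦ PHQ` with `P`, `Q` invertible. For
`diag(z^e₁, …, z^e_r, 0, …, 0)` it fails exactly when `z^(τ+1)` divides a whole column, that is,
when there is a zero column (`r < ℓ`) or some `e_i > τ`.
-/

open PowerSeries
open scoped Matrix

theorem List.ext_getD_iff {α : Type*} {l₁ l₂ : List α} (d : α) (h : l₁.length = l₂.length) :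
    l₁ = l₂ ↔ ∀ k < l₁.length, l₁.getD k d = l₂.getD k d := by
  rw [List.ext_getElem_iff]
  simp +contextual [h]

theorem length_lambdaStar {X Y S : Type*} (δ : S → X → S) (lam : S → X → Y) (s : S)
    (w : List X) : (lambdaStar δ lam s w).length = w.length := by
  induction w generalizing s with
  | nil => rfl
  | cons x w ih => simp [lambdaStar, ih]

namespace Matrix

section Divisibility

variable {R : Type*} [CommRing R] {m n : Type*} [Fintype n]

theorem dvd_mulVec_apply {a : R} {v : n → R} (h : ∀ j, a ∣ v j) (N : Matrix m n R) (i : m) :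
    a ∣ (N *ᵥ v) i :=
  Finset.dvd_sum fun j _ => (h j).mul_left _

theorem forall_dvd_mulVec_iff [DecidableEq n] {a : R} {P : Matrix n n R} (hP : IsUnit P.det)
    (v : n → R) : (∀ i, a ∣ (P *ᵥ v) i) ↔ ∀ i, a ∣ v i := by
  refine ⟨fun h i => ?_, fun h => dvd_mulVec_apply h P⟩
  simpa [mulVec_mulVec, nonsing_inv_mul P hP] using dvd_mulVec_apply h P⁻¹ i

def InjectiveWithDelay (H : Matrix m n R) (π : R) (τ : ℕ) : Prop :=
  ∀ u : n → R, (∀ i, π ^ (τ + 1) ∣ (H *ᵥ u) i) → ∀ j, π ∣ u j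

theorem injectiveWithDelay_mul_mul_iff [Fintype m] [DecidableEq m] [DecidableEq n]
    {P : Matrix m m R} {Q : Matrix n n R} (hP : IsUnit P.det) (hQ : IsUnit Q.det)
    (H : Matrix m n R) (π : R) (τ : ℕ) :
    InjectiveWithDelay (P * H * Q) π τ ↔ InjectiveWithDelay H π τ := by
  have hQsurj : Function.Surjective (Q *ᵥ ·) :=
    mulVec_surjective_iff_isUnit.mpr ((isUnit_iff_isUnit_det Q).mpr hQ)
  unfold InjectiveWithDelay
  conv_rhs => rw [hQsurj.forall]
  simp only [← mulVec_mulVec, forall_dvd_mulVec_iff hP, forall_dvd_mulVec_iff hQ]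

end Divisibility

section SmithForm

def snfDiag {R : Type*} [MonoidWithZero R] {r m ℓ : ℕ} (π : R) (e : Fin r → ℕ) :
    Matrix (Fin m) (Fin ℓ) R :=
  of fun i j => if h : (i : ℕ) = (j : ℕ) ∧ (i : ℕ) < r then π ^ e ⟨(i : ℕ), h.2⟩ else 0

theorem map_snfDiag {R S : Type*} [Semiring R] [Semiring S] (f : R →+* S) {r m ℓ : ℕ} (π : R)
    (e : Fin r → ℕ) : (snfDiag π e : Matrix (Fin m) (Fin ℓ) R).map f = snfDiag (f π) e := by
  ext i j
  simp only [snfDiag, map_apply, of_apply]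
  split_ifs <;> simp

variable {R : Type*} [CommRing R] {r m ℓ : ℕ}

theorem snfDiag_mulVec_apply (π : R) (e : Fin r → ℕ) (u : Fin ℓ → R) (j : Fin ℓ)
    (hjr : (j : ℕ) < r) (hjm : (j : ℕ) < m) :
    (snfDiag π e *ᵥ u) ⟨j, hjm⟩ = π ^ e ⟨j, hjr⟩ * u j := by
  rw [mulVec, dotProduct, Finset.sum_eq_single j]
  · simp [snfDiag, hjr]
  · intro j' _ hj'
    simp [snfDiag, Fin.val_eq_val, Ne.symm hj']
  · simp

theorem injectiveWithDelay_snfDiag_iff [IsDomain R] {π : R} (hπ0 : π ≠ 0) (hπ : ¬IsUnit π)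
    (hrm : r ≤ m) (hrℓ : r ≤ ℓ) (e : Fin r → ℕ) (τ : ℕ) :
    InjectiveWithDelay (snfDiag π e : Matrix (Fin m) (Fin ℓ) R) π τ ↔ r = ℓ ∧ ∀ i, e i ≤ τ := by
  classical
  constructor
  · intro h
    have hcol : ∀ j : Fin ℓ, ¬∀ i : Fin m, π ^ (τ + 1) ∣ snfDiag π e i j := fun j hj =>
      hπ <| isUnit_of_dvd_one <| by
        simpa using h (Pi.single j 1) (by simpa [mulVec_single_one] using hj) j
    refine ⟨?_, fun i => ?_⟩
    · by_contra hr
      refine hcol ⟨r, lt_of_le_of_ne hrℓ hr⟩ fun i => ?_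
      rw [snfDiag, of_apply, dif_neg fun h => (h.1 ▸ h.2).false]
      exact dvd_zero _
    · by_contra! hi
      refine hcol ⟨i, i.2.trans_le hrℓ⟩ fun i' => ?_
      simp only [snfDiag, of_apply]
      split_ifs with h'
      · rw [show (⟨i', h'.2⟩ : Fin r) = i from Fin.ext h'.1]
        exact pow_dvd_pow _ hi
      · exact dvd_zero _
  · rintro ⟨rfl, he⟩ u hu j
    have hj := hu ⟨j, j.2.trans_le hrm⟩
    rw [snfDiag_mulVec_apply π e u j j.2] at hj
    have hpow : π ^ e j * π ∣ π ^ (τ + 1) := by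
      rw [← pow_succ]
      exact pow_dvd_pow _ (by simpa using he j)
    exact (mul_dvd_mul_iff_left (pow_ne_zero _ hπ0)).mp (hpow.trans hj)

end SmithForm

section PowerSeries

variable {R : Type*} [CommSemiring R] {l m n : Type*} [Fintype m]

theorem map_coeff_map_C_mul (A : Matrix l m R) (N : Matrix m n R⟦X⟧) (k : ℕ) :
    (A.map C * N).map (coeff k) = A * N.map (coeff k) := by
  ext i j
  simp [mul_apply, map_sum, coeff_C_mul]

theorem map_coeff_mul_map_C (N : Matrix l m R⟦X⟧) (B : Matrix m n R) (k : ℕ) :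
    (N * B.map C).map (coeff k) = N.map (coeff k) * B := by
  ext i j
  simp [mul_apply, map_sum, coeff_mul_C]

theorem coeff_mulVec_C (N : Matrix l m R⟦X⟧) (x : m → R) (k : ℕ) (i : l) :
    coeff k ((N *ᵥ fun j => C (x j)) i) = (N.map (coeff k) *ᵥ x) i := by
  simp [mulVec, dotProduct, map_sum, coeff_mul_C]

end PowerSeries

end Matrix

section WordSeries

variable {R ι : Type*} [Semiring R]

noncomputable def wordSeries (w : List (ι → R)) : ι → R⟦X⟧ :=
  fun j => mk fun k => w.getD k 0 j

theorem coeff_wordSeries (w : List (ι → R)) (k : ℕ) (j : ι) :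
    coeff k (wordSeries w j) = w.getD k 0 j :=
  coeff_mk _ _

theorem wordSeries_cons (x : ι → R) (w : List (ι → R)) :
    wordSeries (x :: w) = (fun j => C (x j)) + (X : R⟦X⟧) • wordSeries w := by
  ext j k
  cases k <;> simp [coeff_wordSeries]

theorem wordSeries_replicate_zero (k : ℕ) : wordSeries (List.replicate k (0 : ι → R)) = 0 := by
  ext j i
  simp [coeff_wordSeries]

theorem X_pow_dvd_wordSeries_ofFn_sub {R ι : Type*} [Ring R] (u : ι → R⟦X⟧) (τ : ℕ) (j : ι) :
    X ^ τ ∣ wordSeries (List.ofFn fun k : Fin τ => fun j => coeff k (u j)) j - u j := by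
  rw [X_pow_dvd_iff]
  intro k hk
  rw [map_sub, coeff_wordSeries, List.getD_eq_getElem _ _ (by simpa using hk)]
  simp

end WordSeries

section Resolvent

variable {R : Type*} [CommRing R] {n : Type*} [Fintype n] [DecidableEq n]

noncomputable def resolventSeries (A : Matrix n n R) : Matrix n n R⟦X⟧ :=
  Matrix.of fun i j => mk fun k => (A ^ k) i j

theorem map_coeff_resolventSeries (A : Matrix n n R) (k : ℕ) :
    (resolventSeries A).map (coeff k) = A ^ k := by
  ext i j
  simp [resolventSeries]

theorem one_sub_X_smul_mul_resolventSeries (A : Matrix n n R) :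
    (1 - (X : R⟦X⟧) • A.map C) * resolventSeries A = 1 := by
  rw [sub_mul, one_mul, Matrix.smul_mul]
  ext i j k
  cases k with
  | zero => by_cases hij : i = j <;> simp [resolventSeries, Matrix.one_apply, hij]
  | succ k =>
    have hA := congrFun₂ (Matrix.map_coeff_map_C_mul A (resolventSeries A) k) i j
    rw [map_coeff_resolventSeries] at hA
    by_cases hij : i = j <;>
      simp_all [resolventSeries, Matrix.one_apply, coeff_succ_X_mul, pow_succ']

theorem adjugate_one_sub_X_smul (A : Matrix n n R) :
    (1 - (X : R⟦X⟧) • A.map C).adjugate =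
      (1 - (X : R⟦X⟧) • A.map C).det • resolventSeries A := by
  set W := 1 - (X : R⟦X⟧) • A.map C
  calc W.adjugate = W.adjugate * (W * resolventSeries A) := by
        rw [one_sub_X_smul_mul_resolventSeries, Matrix.mul_one]
    _ = W.det • resolventSeries A := by
        rw [← Matrix.mul_assoc, Matrix.adjugate_mul, Matrix.smul_mul, Matrix.one_mul]

end Resolvent

section Localization

theorem isUnit_coeToPowerSeries_oneS {F : Type} [Field F] (s : oneS F) :
    IsUnit (Polynomial.coeToPowerSeries.ringHom (s : Polynomial F)) := by
  rw [isUnit_iff_constantCoeff, Polynomial.coeToPowerSeries.ringHom_apply,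
    Polynomial.constantCoeff_coe]
  exact s.2 ▸ isUnit_one

noncomputable def locToPowerSeries (F : Type) [Field F] : Localization (oneS F) →+* F⟦X⟧ :=
  IsLocalization.lift (M := oneS F) (g := Polynomial.coeToPowerSeries.ringHom)
    isUnit_coeToPowerSeries_oneS

variable {F : Type} [Field F]

theorem locToPowerSeries_algebraMap (p : Polynomial F) :
    locToPowerSeries F (algebraMap _ _ p) = p :=
  IsLocalization.lift_eq _ _

theorem map_one_sub_zMatP {n : ℕ} (A : Matrix (Fin n) (Fin n) F) :
    (1 - zMatP A).map Polynomial.coeToPowerSeries.ringHom = 1 - (X : F⟦X⟧) • A.map C := by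
  ext i j : 1
  by_cases hij : i = j <;> simp [zMatP, hij] <;> ring

end Localization

namespace LFT

variable {F : Type} [Field F] {ℓ m n : ℕ}

def markov (M : LFT F ℓ m n) : ℕ → Matrix (Fin m) (Fin ℓ) F
  | 0 => M.D
  | k + 1 => M.C * M.A ^ k * M.B

noncomputable def transferSeries (M : LFT F ℓ m n) : Matrix (Fin m) (Fin ℓ) F⟦X⟧ :=
  Matrix.of fun i j => PowerSeries.mk fun k => M.markov k i j

theorem map_coeff_transferSeries (M : LFT F ℓ m n) (k : ℕ) :
    M.transferSeries.map (coeff k) = M.markov k := by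
  ext i j
  simp [transferSeries]

theorem transferSeries_eq (M : LFT F ℓ m n) :
    M.transferSeries = (X : F⟦X⟧) •
      (M.C.map PowerSeries.C * resolventSeries M.A * M.B.map PowerSeries.C) +
        M.D.map PowerSeries.C := by
  ext i j k
  cases k with
  | zero => simp [transferSeries, markov]
  | succ k =>
    have h := congrFun₂
      (Matrix.map_coeff_mul_map_C (M.C.map PowerSeries.C * resolventSeries M.A) M.B k) i j
    rw [Matrix.map_coeff_map_C_mul, map_coeff_resolventSeries] at h
    simp_all [transferSeries, markov, coeff_succ_X_mul]

theorem map_fHMat (M : LFT F ℓ m n) :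
    (fHMat M.A M.B M.C M.D).map Polynomial.coeToPowerSeries.ringHom =
      (fPoly M.A : F⟦X⟧) • M.transferSeries := by
  set ψ := Polynomial.coeToPowerSeries.ringHom (R := F)
  have hdet : ψ (fPoly M.A) = (1 - (X : F⟦X⟧) • M.A.map PowerSeries.C).det := by
    rw [fPoly, RingHom.map_det, RingHom.mapMatrix_apply, map_one_sub_zMatP]
  have hadj : (1 - zMatP M.A).adjugate.map ψ = ψ (fPoly M.A) • resolventSeries M.A := by
    rw [← RingHom.mapMatrix_apply, RingHom.map_adjugate, RingHom.mapMatrix_apply,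
      map_one_sub_zMatP, adjugate_one_sub_X_smul, hdet]
  have hC : ∀ {a b : ℕ} (N : Matrix (Fin a) (Fin b) F),
      (N.map Polynomial.C).map ψ = N.map PowerSeries.C := by
    intro a b N
    ext : 1
    simp [ψ]
  rw [fHMat, Matrix.map_add _ (map_add ψ), Matrix.map_smulₛₗ _ ψ _ (map_mul ψ _),
    Matrix.map_smulₛₗ _ ψ _ (map_mul ψ _), Matrix.map_mul, Matrix.map_mul, hadj, hC, hC, hC,
    transferSeries_eq]
  simp only [ψ, Polynomial.coeToPowerSeries.ringHom_apply, Polynomial.coe_X]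
  rw [Matrix.mul_smul, Matrix.smul_mul, smul_add, smul_smul, smul_smul, mul_comm]

theorem map_transferMatLoc (M : LFT F ℓ m n) :
    (transferMatLoc M.A M.B M.C M.D).map (locToPowerSeries F) = M.transferSeries := by
  ext i j : 1
  rw [Matrix.map_apply, transferMatLoc, Matrix.of_apply, Localization.mk_eq_mk',
    locToPowerSeries, IsLocalization.lift_mk'_spec]
  exact congrFun₂ M.map_fHMat i j

theorem getD_lambdaStar (M : LFT F ℓ m n) (s : Fin n → F) (w : List (Fin ℓ → F)) {k : ℕ}
    (hk : k < w.length) :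
    (lambdaStar M.del M.out s w).getD k 0 =
      M.C *ᵥ (M.A ^ k *ᵥ s) + fun i => coeff k ((M.transferSeries *ᵥ wordSeries w) i) := by
  induction w generalizing s k with
  | nil => simp at hk
  | cons x w ih =>
    simp only [wordSeries_cons, Matrix.mulVec_add, Matrix.mulVec_smul, Pi.add_apply,
      Pi.smul_apply, smul_eq_mul, map_add, Matrix.coeff_mulVec_C, map_coeff_transferSeries]
    cases k with
    | zero =>
      ext i
      simp [lambdaStar, out, markov]
    | succ k =>
      rw [lambdaStar, List.getD_cons_succ, ih _ (Nat.lt_of_succ_lt_succ hk)]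
      ext i
      simp only [del, markov, coeff_succ_X_mul, Matrix.mulVec_add, Matrix.mulVec_mulVec,
        pow_succ, Matrix.mul_assoc, Pi.add_apply]
      abel

theorem lambdaStar_eq_lambdaStar_iff (M : LFT F ℓ m n) (s : Fin n → F)
    {w w' : List (Fin ℓ → F)} (h : w.length = w'.length) :
    lambdaStar M.del M.out s w = lambdaStar M.del M.out s w' ↔
      ∀ i, X ^ w.length ∣ (M.transferSeries *ᵥ (wordSeries w - wordSeries w')) i := by
  have hk : ∀ k (hk : k < w.length),
      (lambdaStar M.del M.out s w).getD k 0 = (lambdaStar M.del M.out s w').getD k 0 ↔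
        ∀ i, coeff k ((M.transferSeries *ᵥ (wordSeries w - wordSeries w')) i) = 0 := by
    intro k hk
    rw [getD_lambdaStar M s w hk, getD_lambdaStar M s w' (h ▸ hk), add_right_inj, funext_iff]
    simp [Matrix.mulVec_sub, sub_eq_zero]
  rw [List.ext_getD_iff 0 (by simp only [length_lambdaStar, h]), length_lambdaStar]
  simp only [X_pow_dvd_iff]
  exact (forall₂_congr hk).trans ⟨fun H i k hk => H k hk i, fun H k hk i => H i k hk⟩

theorem tauInjective_iff_injectiveWithDelay (M : LFT F ℓ m n) (τ : ℕ) :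
    TauInjective M.del M.out τ ↔ M.transferSeries.InjectiveWithDelay X τ := by
  constructor
  · intro hinj u hu j
    have hw : lambdaStar M.del M.out 0 (List.ofFn fun k : Fin (τ + 1) => fun j => coeff k (u j)) =
        lambdaStar M.del M.out 0 (List.replicate (τ + 1) 0) := by
      rw [lambdaStar_eq_lambdaStar_iff M 0 (by simp), wordSeries_replicate_zero, sub_zero,
        List.length_ofFn]
      intro i
      rw [← add_sub_cancel u (wordSeries _), Matrix.mulVec_add]
      exact dvd_add (hu i) (Matrix.dvd_mulVec_apply (X_pow_dvd_wordSeries_ofFn_sub u (τ + 1)) _ i)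
    rw [List.ofFn_succ, List.replicate_succ] at hw
    have hx := hinj 0 _ 0 _ _ (by simp) (by simp) hw
    rw [X_dvd_iff, ← coeff_zero_eq_constantCoeff_apply]
    simpa using congrFun hx j
  · intro hH s x x' α α' hα hα' hout
    rw [lambdaStar_eq_lambdaStar_iff M s (by simp [hα, hα'])] at hout
    have hX := hH _ (by simpa [hα] using hout)
    ext j
    have hj := X_dvd_iff.mp (hX j)
    rwa [← coeff_zero_eq_constantCoeff_apply, Pi.sub_apply, map_sub, coeff_wordSeries,
      coeff_wordSeries, sub_eq_zero] at hj

end LFT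

theorem tauInjective_iff_snf_general {F : Type} [Field F] {ℓ m n : ℕ}
    (M : LFT F ℓ m n)
    (r : ℕ) (hrm : r ≤ m) (hrℓ : r ≤ ℓ)
    (P : Matrix (Fin m) (Fin m) (Localization (oneS F)))
    (Q : Matrix (Fin ℓ) (Fin ℓ) (Localization (oneS F)))
    (e : Fin r → ℕ) (hP : IsUnit P.det) (hQ : IsUnit Q.det)
    (hsnf : P * transferMatLoc M.A M.B M.C M.D * Q = Matrix.of (fun (i : Fin m) (j : Fin ℓ) =>
      if h : (i : ℕ) = (j : ℕ) ∧ (i : ℕ) < r then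
        algebraMap (Polynomial F) (Localization (oneS F)) Polynomial.X ^ e ⟨(i : ℕ), h.2⟩
      else 0))
    (τ : ℕ) :
    TauInjective M.del M.out τ ↔ r = ℓ ∧ ∀ i : Fin r, e i ≤ τ := by
  set φ := locToPowerSeries F
  have hP' : IsUnit (P.map φ).det := by
    rw [← RingHom.mapMatrix_apply, ← RingHom.map_det]
    exact hP.map φ
  have hQ' : IsUnit (Q.map φ).det := by
    rw [← RingHom.mapMatrix_apply, ← RingHom.map_det]
    exact hQ.map φ
  have hsnf' : P.map φ * M.transferSeries * Q.map φ = Matrix.snfDiag X e := by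
    rw [← M.map_transferMatLoc, ← Matrix.map_mul, ← Matrix.map_mul, hsnf]
    refine (Matrix.map_snfDiag φ _ e).trans ?_
    rw [locToPowerSeries_algebraMap, Polynomial.coe_X]
  rw [M.tauInjective_iff_injectiveWithDelay, ← Matrix.injectiveWithDelay_mul_mul_iff hP' hQ',
    hsnf', Matrix.injectiveWithDelay_snfDiag_iff X_prime.ne_zero X_prime.not_isUnit hrm hrℓ]

/-- if the transfer function matrix `H` of an LFT `M`, regarded as a matrix
over `F[z]_S` (`S = 1 + zF[z]`), has Smith normal form
`P·H·Q = diag(z^{e₁}, …, z^{e_r}, 0, …, 0)` with `P, Q` invertible over `F[z]_S` and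
`e₁ ≤ … ≤ e_r`, then `M` is injective with delay `τ` if and only if `r = ℓ` and
`e_r ≤ τ` (equivalently, since `e` is monotone, all `e_i ≤ τ`). -/
theorem tauInjective_iff_snf {F : Type} [Field F] {ℓ m n : ℕ}
    (hℓ : 0 < ℓ) (hm : 0 < m) (hn : 0 < n) (M : LFT F ℓ m n)
    (r : ℕ) (hrm : r ≤ m) (hrℓ : r ≤ ℓ)
    (P : Matrix (Fin m) (Fin m) (Localization (oneS F)))
    (Q : Matrix (Fin ℓ) (Fin ℓ) (Localization (oneS F)))
    (e : Fin r → ℕ) (hP : IsUnit P.det) (hQ : IsUnit Q.det) (he : Monotone e)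
    (hsnf : P * transferMatLoc M.A M.B M.C M.D * Q = Matrix.of (fun (i : Fin m) (j : Fin ℓ) =>
      if h : (i : ℕ) = (j : ℕ) ∧ (i : ℕ) < r then
        algebraMap (Polynomial F) (Localization (oneS F)) Polynomial.X ^ e ⟨(i : ℕ), h.2⟩
      else 0))
    (τ : ℕ) :
    TauInjective M.del M.out τ ↔ r = ℓ ∧ ∀ i : Fin r, e i ≤ τ :=
  tauInjective_iff_snf_general M r hrm hrℓ P Q e hP hQ hsnf τ
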